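/- Let A be a commutative ring, σ : A → A a ring endomorphism, and d ∈ A. Fix natural numbers r ≥ 1 and w with w ≤ r. Let M_0, …, M_{r−1} be A-modules (indices taken modulo r) together with σ-semilinear maps F_i : M_i → M_{i+1} such that for every i ≠ 0 the module M_{i+1} is generated as an A-module by the image of F_i (this holds when the linearization of F_i is an isomorphism), and such that d^w · x lies in the A-submodule generated by F_0(M_0) for every x ∈ M_1. Let P_i ⊆ M_i denote the A-submodule generated by the image of M_0 under F_{i−1} ∘ ⋯ ∘ F_0 (with P_0 = M_0), and define Ñ_0 = M_0 and, for 1 ≤ i ≤ r−1, Ñ_i = P_i + σ^{i−1}(d)^{max(w−i,0)} · M_i ⊆ M_i. For a σ-semilinear map F and a submodule N, write ⟨F(N)⟩ for the A-submodule generated by the image F(N). Then for every i ∈ {0,…,r−1} (indices cyclic, Ñ_r = Ñ_0) one has ⟨F_i(Ñ_i)⟩ ⊆ Ñ_{i+1} and σ^i(d) · Ñ_{i+1} ⊆ ⟨F_i(Ñ_i)⟩, where σ^i denotes the i-th iterate of σ. -/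

import Mathlib

open Pointwise

/-!
Put `Q = ⟨F_n(P_n)⟩` and `c = σ^n(d)`. Both `⟨F_n(Ñ_n)⟩` and `Ñ_{n+1}` are of the form
`Q + c^e • M_{n+1}`. For the image, `e = w - n`: a semilinear map whose image generates carries
`σ^{n-1}(d)^e • M_n` to `σ^n(d)^e • M_{n+1}` up to span, and in degree `0` the term `d^w • M_1`
is absorbed into `Q` by the divisibility hypothesis. For `Ñ_{n+1}`, `e = w - (n + 1)`, except in
the top degree `n + 1 = r`, where `Ñ_r = Ñ_0 = M_0` corresponds to `e = 0`. The two
exponents differ by at most one, so each module contains `c` times the other.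
-/

namespace Submodule

variable {A M M' : Type*} [CommRing A] {σ : A →+* A}
  [AddCommGroup M] [AddCommGroup M'] [Module A M] [Module A M']

theorem span_image_span (F : M →ₛₗ[σ] M') (s : Set M) :
    span A (F '' span A s) = span A (F '' s) :=
  le_antisymm (span_le.2 (image_span_subset_span F s)) (span_mono (Set.image_mono subset_span))

theorem span_image_sup (F : M →ₛₗ[σ] M') (N N' : Submodule A M) :
    span A (F '' ↑(N ⊔ N')) = span A (F '' N) ⊔ span A (F '' N') := by
  rw [← span_union, ← Set.image_union, ← span_image_span F (↑N ∪ ↑N'), span_union, span_eq,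
    span_eq]

theorem span_image_smul (F : M →ₛₗ[σ] M') (c : A) (N : Submodule A M) :
    span A (F '' ↑(c • N)) = σ c • span A (F '' N) := by
  rw [coe_pointwise_smul, image_smul_setₛₗ, smul_span]

theorem span_image_sup_pow_smul_top (F : M →ₛₗ[σ] M') (hF : span A (Set.range F) = ⊤)
    (P : Submodule A M) (c : A) (e : ℕ) :
    span A (F '' ↑(P ⊔ c ^ e • ⊤)) = span A (F '' P) ⊔ σ c ^ e • ⊤ := by
  rw [span_image_sup, span_image_smul, top_coe, Set.image_univ, hF, map_pow]

theorem pow_smul_le_pow_smul (c : A) {a b : ℕ} (h : b ≤ a) (N : Submodule A M) :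
    c ^ a • N ≤ c ^ b • N := by
  obtain ⟨k, rfl⟩ := Nat.exists_eq_add_of_le h
  rw [pow_add, mul_smul]
  exact smul_mono_right _ (smul_le_self_of_tower _ N)

theorem sup_pow_smul_le_sup_pow_smul (Q N : Submodule A M) (c : A) {a b : ℕ} (h : b ≤ a) :
    Q ⊔ c ^ a • N ≤ Q ⊔ c ^ b • N :=
  sup_le_sup_left (pow_smul_le_pow_smul c h N) Q

theorem smul_sup_pow_smul_le (Q N : Submodule A M) (c : A) {a b : ℕ} (h : a ≤ b + 1) :
    c • (Q ⊔ c ^ b • N) ≤ Q ⊔ c ^ a • N := by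
  rw [smul_sup', ← mul_smul, ← pow_succ']
  exact sup_le_sup (smul_le_self_of_tower c Q) (pow_smul_le_pow_smul c h N)

end Submodule

/-- **Mixed-characteristic Dieudonnéfication.**
Let `A` be a commutative ring with endomorphism `σ` and `d ∈ A`, `r ≥ 1`, `w ≤ r`.
Given `A`-modules `M i` (`i ∈ ℤ/r`) with `σ`-semilinear maps `F i : M i → M (i+1)`
such that for `i ≠ 0` the module `M (i+1)` is generated by the image of `F i`, and
`d^w • M 1` lies in the submodule generated by `F 0 (M 0)`, let `P i` be the
submodule generated by the image of `M 0` under `F (i-1) ∘ ⋯ ∘ F 0` and set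
`Ñ 0 = M 0`, `Ñ i = P i + σ^(i-1)(d)^(max (w-i) 0) • M i` for `1 ≤ i ≤ r-1`.
Then for all `i` (cyclically): `⟨F i (Ñ i)⟩ ⊆ Ñ (i+1)` and
`σ^i(d) • Ñ (i+1) ⊆ ⟨F i (Ñ i)⟩`. -/
theorem mixed_char_dieudonnefication
    {A : Type*} [CommRing A] (σ : A →+* A) (d : A)
    (r w : ℕ) (hr : 1 ≤ r) (hw : w ≤ r)
    (M : ZMod r → Type*) [∀ i, AddCommGroup (M i)] [∀ i, Module A (M i)]
    (F : ∀ i : ZMod r, M i →ₛₗ[σ] M (i + 1))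
    (hgen : ∀ i : ZMod r, i ≠ 0 → Submodule.span A (Set.range (F i)) = ⊤)
    (hdiv : ∀ x : M ((0 : ZMod r) + 1),
      d ^ w • x ∈ Submodule.span A (Set.range (F 0)))
    -- `P i` is the submodule generated by the image of `M 0` under `F (i-1) ∘ ⋯ ∘ F 0`
    (P : ∀ i : ZMod r, Submodule A (M i))
    (hP0 : P 0 = ⊤)
    (hPsucc : ∀ i : ℕ, i + 1 ≤ r - 1 →
      P ((i : ZMod r) + 1) =
        Submodule.span A (F (i : ZMod r) '' (P (i : ZMod r) : Set (M (i : ZMod r)))))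
    -- the graded module `Ñ`
    (Nt : ∀ i : ZMod r, Submodule A (M i))
    (hN0 : Nt 0 = ⊤)
    (hNi : ∀ i : ℕ, 1 ≤ i → i ≤ r - 1 →
      Nt (i : ZMod r) = P (i : ZMod r) ⊔
        ((⇑σ)^[i - 1] d) ^ (w - i) • (⊤ : Submodule A (M (i : ZMod r)))) :
    ∀ i : ZMod r,
      Submodule.span A (F i '' (Nt i : Set (M i))) ≤ Nt (i + 1) ∧
      ((⇑σ)^[i.val] d) • Nt (i + 1) ≤
        Submodule.span A (F i '' (Nt i : Set (M i))) := by
  have : NeZero r := ⟨by omega⟩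
  intro i
  obtain ⟨n, hn, rfl⟩ : ∃ n < r, (n : ZMod r) = i := ⟨i.val, i.val_lt, ZMod.natCast_zmod_val i⟩
  rw [ZMod.val_cast_of_lt hn]
  have himage : Submodule.span A (F n '' Nt n) =
      Submodule.span A (F n '' P n) ⊔ ((⇑σ)^[n] d) ^ (w - n) • ⊤ := by
    cases n with
    | zero =>
      have hdiv' : d ^ w • ⊤ ≤ Submodule.span A (Set.range (F 0)) :=
        fun _ ⟨x, _, hx⟩ ↦ hx ▸ hdiv x
      rw [Nat.cast_zero, hN0, hP0, Function.iterate_zero_apply, Nat.sub_zero, Submodule.top_coe,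
        Set.image_univ, sup_eq_left.2 hdiv']
    | succ m =>
      have hne : ((m + 1 : ℕ) : ZMod r) ≠ 0 :=
        (ZMod.natCast_eq_zero_iff _ _).not.2 (Nat.not_dvd_of_pos_of_lt m.succ_pos hn)
      rw [hNi (m + 1) (by omega) (by omega), Submodule.span_image_sup_pow_smul_top _ (hgen _ hne),
        Nat.add_sub_cancel, ← Function.iterate_succ_apply' σ]
  have hnext : Nt (n + 1) = Submodule.span A (F n '' P n) ⊔
      ((⇑σ)^[n] d) ^ (if n + 1 = r then 0 else w - (n + 1)) • ⊤ := by
    split_ifs with hlast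
    · have hwrap : (n : ZMod r) + 1 = 0 := by
        rw [← Nat.cast_add_one, hlast, ZMod.natCast_self]
      rw [pow_zero, one_smul, sup_top_eq, hwrap, hN0]
    · have hNsucc := hNi (n + 1) (by omega) (by omega)
      rw [Nat.cast_succ, Nat.add_sub_cancel] at hNsucc
      rw [hNsucc, hPsucc n (by omega)]
  rw [himage, hnext]
  exact ⟨Submodule.sup_pow_smul_le_sup_pow_smul _ _ _ (by split_ifs <;> omega),
    Submodule.smul_sup_pow_smul_le _ _ _ (by split_ifs <;> omega)⟩
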